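/- arXiv:2409.07646 — 6 statements merged into one kernel-verified Lean document; each statement's English description precedes it below -/
import Mathlib

section
/- Let π : A → B be a unital star-homomorphism between unital C*-algebras. Then for every self-adjoint element b in the image π(A), there exists a self-adjoint a ∈ A with π(a) = b and ‖a‖ = ‖b‖. -/
/-- Let `π : A → B` be a unital star-homomorphism between unital C*-algebras.
Then for every self-adjoint element `b` in the image of `π`, there exists a self-adjoint
`a ∈ A` with `π a = b` and `‖a‖ = ‖b‖`. -/
theorem stmt2 {A B : Type*}
    [NormedRing A] [StarRing A] [CStarRing A] [NormedAlgebra ℂ A]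
    [CompleteSpace A] [StarModule ℂ A]
    [NormedRing B] [StarRing B] [CStarRing B] [NormedAlgebra ℂ B]
    [CompleteSpace B] [StarModule ℂ B]
    (π : A →⋆ₐ[ℂ] B) (b : B) (hb : IsSelfAdjoint b) (hbmem : b ∈ Set.range π) :
    ∃ a : A, IsSelfAdjoint a ∧ π a = b ∧ ‖a‖ = ‖b‖ := by
  letI : CStarAlgebra A := ⟨⟩
  letI : CStarAlgebra B := ⟨⟩
  obtain hB | hB := subsingleton_or_nontrivial B
  · refine ⟨0, (star_zero A), Subsingleton.elim _ _, ?_⟩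
    rw [Subsingleton.elim b 0, norm_zero, norm_zero]
  obtain ⟨a₀, ha₀⟩ := hbmem
  set a₁ : A := (2 : ℂ)⁻¹ • (a₀ + star a₀) with ha₁def
  have ha₁ : IsSelfAdjoint a₁ := by
    simp [ha₁def, IsSelfAdjoint, star_smul, add_comm]
  have hπa₁ : π a₁ = b := by
    simp only [ha₁def, map_smul, map_add, map_star, ha₀, hb.star_eq]
    rw [← two_smul ℂ b, smul_smul]
    norm_num
  set f : ℝ → ℝ := fun x => max (-‖b‖) (min x ‖b‖) with hfdef
  have hfc : Continuous f := by fun_prop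
  have hfb : ∀ x ∈ spectrum ℝ b, f x = x := by
    intro x hx
    have h1 : ‖x‖ ≤ ‖b‖ := spectrum.norm_le_norm_of_mem hx
    rw [Real.norm_eq_abs, abs_le] at h1
    simp only [hfdef]
    rw [min_eq_left h1.2, max_eq_right h1.1]
  have hπcont : Continuous π :=
    AddMonoidHomClass.continuous_of_bound π 1 fun a => by
      simpa using NonUnitalStarAlgHom.norm_apply_le π a
  have hmap : π (cfc f a₁) = b := by
    rw [π.map_cfc f a₁ hfc.continuousOn (hφ := hπcont)
      (ha := ha₁) (hφa := hπa₁ ▸ hb), hπa₁, cfc_congr hfb, cfc_id' ℝ b]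
  refine ⟨cfc f a₁, cfc_predicate f a₁, hmap, ?_⟩
  refine le_antisymm ?_ ?_
  · refine norm_cfc_le (norm_nonneg b) fun x hx => ?_
    rw [Real.norm_eq_abs]
    exact abs_le.mpr ⟨le_max_left _ _,
      max_le (by linarith [norm_nonneg b]) (min_le_right _ _)⟩
  · calc ‖b‖ = ‖π (cfc f a₁)‖ := by rw [hmap]
      _ ≤ ‖cfc f a₁‖ := NonUnitalStarAlgHom.norm_apply_le π _
end

section
/- Let θ_x denote the translation action of ℝ on Borel probability measures on ℝ, defined by θ_t(P)(A) = P(A − t). Let d ≥ 2 and let 1 > p_1 ≥ p_2 ≥ ⋯ ≥ p_d ≥ 0 with Σ_{i=1}^d p_i = 1 (so all p_i < 1). Then for every Borel probability measure P on ℝ, P ≠ Σ_{i=1}^d p_i · θ_{log p_i}(P). -/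
open MeasureTheory

/-- Let `θ_t(P)` be translation of a Borel probability measure on `ℝ`,
`θ_t(P)(A) = P(A - t)`, i.e. the pushforward by `x ↦ x + t`. Let `d ≥ 2` and
`1 > p 0 ≥ p 1 ≥ ⋯ ≥ p (d-1) ≥ 0` with `Σ p i = 1`. Then for every Borel probability
measure `P` on `ℝ`, `P ≠ Σ_i p i • θ_{log (p i)}(P)`. -/
theorem stmt3 (d : ℕ) (hd : 2 ≤ d) (p : Fin d → ℝ)
    (hanti : Antitone p) (hlt : ∀ i, p i < 1) (hnonneg : ∀ i, 0 ≤ p i)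
    (hsum : ∑ i, p i = 1)
    (P : Measure ℝ) [IsProbabilityMeasure P] :
    P ≠ ∑ i, ENNReal.ofReal (p i) •
        Measure.map (fun x : ℝ => x + Real.log (p i)) P := by
  intro hP
  let i0 : Fin d := ⟨0, by omega⟩
  have hi0le : ∀ i : Fin d, i0 ≤ i := fun i => by
    simp only [Fin.le_def, i0]; exact Nat.zero_le _
  have hp0 : 0 < p i0 := by
    by_contra h
    push_neg at h
    have hle : ∀ i, p i ≤ 0 := fun i => le_trans (hanti (hi0le i)) h
    have : (∑ i, p i) ≤ 0 := Finset.sum_nonpos fun i _ => hle i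
    linarith
  set c : ℝ := -Real.log (p i0) with hc
  have hcpos : 0 < c := by
    have := Real.log_neg hp0 (hlt i0)
    simp only [hc]; linarith
  -- sum of coefficients is 1
  have hcoef : ∑ i, ENNReal.ofReal (p i) = 1 := by
    rw [← ENNReal.ofReal_sum_of_nonneg fun i _ => hnonneg i, hsum, ENNReal.ofReal_one]
  -- the functional equation on CDF values
  have hF : ∀ a : ℝ, P (Set.Iic a)
      = ∑ i, ENNReal.ofReal (p i) * P (Set.Iic (a - Real.log (p i))) := by
    intro a
    conv_lhs => rw [hP]
    rw [Measure.finset_sum_apply]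
    refine Finset.sum_congr rfl fun i _ => ?_
    rw [Measure.smul_apply, smul_eq_mul,
      Measure.map_apply (measurable_add_const _) measurableSet_Iic,
      Set.preimage_add_const_Iic]
  -- key step: F(a) ≥ F(a+c)
  have key : ∀ a : ℝ, P (Set.Iic a) = P (Set.Iic (a + c)) := by
    intro a
    refine le_antisymm (measure_mono (Set.Iic_subset_Iic.2 (by linarith))) ?_
    calc P (Set.Iic (a + c)) = ∑ i, ENNReal.ofReal (p i) * P (Set.Iic (a + c)) := by
          rw [← Finset.sum_mul, hcoef, one_mul]
      _ ≤ ∑ i, ENNReal.ofReal (p i) * P (Set.Iic (a - Real.log (p i))) := by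
          refine Finset.sum_le_sum fun i _ => ?_
          rcases eq_or_lt_of_le (hnonneg i) with h | h
          · simp [← h]
          · have hlog : Real.log (p i) ≤ Real.log (p i0) :=
              Real.log_le_log h (hanti (hi0le i))
            have hsub : Set.Iic (a + c) ⊆ Set.Iic (a - Real.log (p i)) := by
              apply Set.Iic_subset_Iic.2
              simp only [hc] at hlog ⊢; linarith
            exact mul_le_mul_right (measure_mono hsub) _
      _ = P (Set.Iic a) := (hF a).symm
  -- iterate: F(a + n*c) = F(a)
  have iter : ∀ (n : ℕ) (a : ℝ), P (Set.Iic (a + n * c)) = P (Set.Iic a) := by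
    intro n
    induction n with
    | zero => intro a; simp
    | succ n ih =>
      intro a
      have : a + (n + 1 : ℕ) * c = (a + c) + n * c := by push_cast; ring
      rw [this, ih, ← key]
  -- F(0) = 1 via the atTop limit
  have h1 : Filter.Tendsto (fun n : ℕ => P (Set.Iic ((n : ℝ) * c))) Filter.atTop
      (nhds (P Set.univ)) := by
    refine (tendsto_measure_Iic_atTop P).comp ?_
    exact Filter.Tendsto.atTop_mul_const hcpos tendsto_natCast_atTop_atTop
  have hF1 : P (Set.Iic 0) = P Set.univ := by
    have : ∀ n : ℕ, P (Set.Iic ((n : ℝ) * c)) = P (Set.Iic 0) := by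
      intro n; have := iter n 0; simpa using this
    refine tendsto_nhds_unique ?_ h1
    simp only [this]
    exact tendsto_const_nhds
  -- F(0) = 0 via continuity from above
  have h2 : Filter.Tendsto (fun n : ℕ => P (Set.Iic (-((n : ℝ) * c)))) Filter.atTop
      (nhds (P (⋂ n : ℕ, Set.Iic (-((n : ℝ) * c))))) := by
    refine tendsto_measure_iInter_atTop (fun n => measurableSet_Iic.nullMeasurableSet)
      ?_ ⟨0, measure_ne_top _ _⟩
    intro m n hmn
    refine Set.Iic_subset_Iic.2 ?_
    have : (m : ℝ) * c ≤ (n : ℝ) * c := by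
      have : (m : ℝ) ≤ n := Nat.cast_le.2 hmn
      nlinarith
    linarith
  have hempty : (⋂ n : ℕ, Set.Iic (-((n : ℝ) * c))) = ∅ := by
    ext x
    simp only [Set.mem_iInter, Set.mem_Iic, Set.mem_empty_iff_false, iff_false, not_forall]
    obtain ⟨n, hn⟩ := exists_nat_gt (-x / c)
    refine ⟨n, ?_⟩
    push_neg
    have : -x / c < n := hn
    have := (div_lt_iff₀ hcpos).1 this
    linarith
  have hF0 : P (Set.Iic 0) = 0 := by
    have heq : ∀ n : ℕ, P (Set.Iic (-((n : ℝ) * c))) = P (Set.Iic 0) := by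
      intro n
      have := iter n (-((n : ℝ) * c))
      simpa using this.symm
    rw [hempty] at h2
    simp only [heq, measure_empty] at h2
    exact tendsto_nhds_unique tendsto_const_nhds h2
  rw [hF0, measure_univ] at hF1
  exact zero_ne_one hF1
end

section
/- Fix d ≥ 2 and n ≥ 2, and let ψ = |1⟩⟨1| (a pure state) and φ = (1/d)·tr_d (the maximally mixed state) on M_d(ℂ), both diagonal in the standard basis. Define the density matrix ω = (1/(n−1)) Σ_{k=1}^{n−1} ψ^{⊗k} ⊗ φ^{⊗(n−k)} on M_d(ℂ)^{⊗n}. Then the nonzero spectrum of ω consists of the eigenvalues λ_j = (1/(n−1))·(d/(d−1))·(d^{−j} − d^{−n}) for j = 1, …, n−1, where λ_j occurs with multiplicity m_j = (d−1)d^{j−1} + δ_{j,1}. -/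
/-- Diagonal entry of `ω = (1/(n-1)) Σ_{k=1}^{n-1} ψ^{⊗k} ⊗ φ^{⊗(n-k)}` at the standard
basis vector indexed by `x : Fin n → Fin d`, where `ψ = |1⟩⟨1|` (the basis state `0`) and
`φ = (1/d)·I_d`; all these matrices are diagonal in the standard basis. -/
noncomputable def ltwDiagEntry (d n : ℕ) (x : Fin n → Fin d) : ℝ :=
  (1 / ((n : ℝ) - 1)) * ∑ k ∈ Finset.Icc 1 (n - 1),
    ∏ i : Fin n,
      (if (i : ℕ) < k then (if (x i : ℕ) = 0 then (1 : ℝ) else 0) else 1 / (d : ℝ))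

/-- The claimed eigenvalues `λ_j = (1/(n-1))·(d/(d-1))·(d^{-j} - d^{-n})`. -/
noncomputable def ltwEigenvalue (d n j : ℕ) : ℝ :=
  (1 / ((n : ℝ) - 1)) * ((d : ℝ) / ((d : ℝ) - 1)) *
    ((d : ℝ) ^ (-(j : ℤ)) - (d : ℝ) ^ (-(n : ℤ)))


open Finset

variable {d n : ℕ}

def leadZ (d n : ℕ) (x : Fin n → Fin d) (k : ℕ) : Prop :=
  ∀ i : Fin n, (i : ℕ) < k → (x i : ℕ) = 0

instance : ∀ (x : Fin n → Fin d) (k : ℕ), Decidable (leadZ d n x k) := by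
  intro x k; unfold leadZ; infer_instance

def lead (d n : ℕ) (x : Fin n → Fin d) : ℕ := Nat.findGreatest (leadZ d n x) (n - 1)

lemma leadZ_anti {x : Fin n → Fin d} {k k' : ℕ} (h : k ≤ k') (hk' : leadZ d n x k') :
    leadZ d n x k := fun i hi => hk' i (lt_of_lt_of_le hi h)

lemma lead_le (x : Fin n → Fin d) : lead d n x ≤ n - 1 := Nat.findGreatest_le _

lemma leadZ_iff_le_lead {x : Fin n → Fin d} {k : ℕ} (h1 : 1 ≤ k) (h2 : k ≤ n - 1) :
    leadZ d n x k ↔ k ≤ lead d n x := by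
  constructor
  · exact fun h => Nat.le_findGreatest h2 h
  · intro h
    have hpos : lead d n x ≠ 0 := by omega
    exact leadZ_anti h (Nat.findGreatest_of_ne_zero rfl hpos)

lemma card_filter_not_lt (k : ℕ) (hk : k ≤ n) :
    (Finset.univ.filter (fun i : Fin n => ¬ (i : ℕ) < k)).card = n - k := by
  have : (Finset.univ.filter (fun i : Fin n => ¬ (i : ℕ) < k)) =
      Finset.map ⟨fun j : Fin (n - k) => (⟨k + j, by omega⟩ : Fin n),
        by intro a b hab; simpa [Fin.ext_iff] using hab⟩ Finset.univ := by
    ext i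
    simp only [mem_filter, mem_univ, true_and, mem_map, Function.Embedding.coeFn_mk,
      Fin.ext_iff, not_lt]
    constructor
    · intro h; exact ⟨⟨i - k, by omega⟩, by show k + (i - k) = (i:ℕ); omega⟩
    · rintro ⟨j, hj⟩; change k + (j:ℕ) = i at hj; omega
  rw [this]; simp

lemma prod_term (x : Fin n → Fin d) (k : ℕ) (hk : k ≤ n) :
    (∏ i : Fin n, (if (i : ℕ) < k then (if (x i : ℕ) = 0 then (1 : ℝ) else 0)
      else 1 / (d : ℝ))) = if leadZ d n x k then (1 / (d : ℝ)) ^ (n - k) else 0 := by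
  by_cases h : leadZ d n x k
  · rw [if_pos h]
    rw [Finset.prod_ite]
    have h1 : ∀ i ∈ Finset.univ.filter (fun i : Fin n => (i : ℕ) < k),
        (if (x i : ℕ) = 0 then (1 : ℝ) else 0) = 1 := by
      intro i hi
      simp only [mem_filter, mem_univ, true_and] at hi
      rw [if_pos (h i hi)]
    rw [Finset.prod_congr rfl h1, Finset.prod_const_one, one_mul, Finset.prod_const,
      card_filter_not_lt k hk]
  · rw [if_neg h]
    simp only [leadZ, not_forall] at h
    obtain ⟨i0, hi0, hx⟩ := h
    refine Finset.prod_eq_zero (Finset.mem_univ i0) ?_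
    rw [if_pos hi0, if_neg hx]

lemma entry_eq_sum (x : Fin n → Fin d) :
    ltwDiagEntry d n x =
      (1 / ((n : ℝ) - 1)) * ∑ k ∈ Finset.Icc 1 (lead d n x), (1 / (d : ℝ)) ^ (n - k) := by
  unfold ltwDiagEntry
  congr 1
  rw [show (∑ k ∈ Finset.Icc 1 (n-1), ∏ i : Fin n,
      (if (i : ℕ) < k then (if (x i : ℕ) = 0 then (1 : ℝ) else 0) else 1 / (d : ℝ))) =
      ∑ k ∈ Finset.Icc 1 (n-1), if leadZ d n x k then (1 / (d : ℝ)) ^ (n - k) else 0 from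
    Finset.sum_congr rfl fun k hk => prod_term x k (by simp [mem_Icc] at hk; omega)]
  rw [← Finset.sum_filter]
  congr 1
  ext k
  simp only [mem_filter, mem_Icc]
  constructor
  · rintro ⟨⟨h1, h2⟩, h3⟩
    exact ⟨h1, (leadZ_iff_le_lead h1 h2).1 h3⟩
  · rintro ⟨h1, h2⟩
    have h2' : k ≤ n - 1 := le_trans h2 (lead_le x)
    exact ⟨⟨h1, h2'⟩, (leadZ_iff_le_lead h1 h2').2 h2⟩

lemma geom_nat (hd : 2 ≤ d) (hn : 2 ≤ n) {m : ℕ} (hm1 : 1 ≤ m) (hm2 : m ≤ n - 1) :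
    (∑ k ∈ Finset.Icc 1 m, (1 / (d : ℝ)) ^ (n - k)) =
      ((d : ℝ) / ((d : ℝ) - 1)) * (((d : ℝ) ^ (n - m))⁻¹ - ((d : ℝ) ^ n)⁻¹) := by
  have hd0 : (d : ℝ) ≠ 0 := by positivity
  have hdm : ((d : ℝ)) - 1 ≠ 0 := by
    have : (2:ℝ) ≤ d := by exact_mod_cast hd
    intro h; linarith
  induction m with
  | zero => omega
  | succ m ih =>
    rcases Nat.lt_or_ge 0 m with h | h
    · have hm1' : 1 ≤ m := h
      rw [Finset.sum_Icc_succ_top (by omega), ih hm1' (by omega)]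
      have hp0 : ((d : ℝ)) ^ (n - (m+1)) ≠ 0 := by positivity
      have h1 : (d : ℝ) ^ (n - m) = (d : ℝ) ^ (n - (m+1)) * d := by
        rw [← pow_succ]; congr 1; omega
      have h2 : (d : ℝ) ^ n = (d : ℝ) ^ (n - (m+1)) * (d : ℝ) ^ (m+1) := by
        rw [← pow_add]; congr 1; omega
      have h3 : (1 / (d : ℝ)) ^ (n - (m+1)) = ((d : ℝ) ^ (n - (m+1)))⁻¹ := by
        rw [one_div, inv_pow]
      rw [h1, h2, h3]
      have hp1 : ((d : ℝ)) ^ (m+1) ≠ 0 := by positivity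
      field_simp
      ring
    · have : m = 0 := by omega
      subst this
      simp only [Finset.Icc_self, Finset.sum_singleton]
      have h1 : (d : ℝ) ^ n = (d : ℝ) ^ (n - 1) * d := by
        rw [← pow_succ]; congr 1; omega
      have h3 : (1 / (d : ℝ)) ^ (n - 1) = ((d : ℝ) ^ (n - 1))⁻¹ := by
        rw [one_div, inv_pow]
      have hp0 : ((d : ℝ)) ^ (n - 1) ≠ 0 := by positivity
      rw [h1, h3]
      field_simp

lemma entry_eq_eigen (hd : 2 ≤ d) (hn : 2 ≤ n) (x : Fin n → Fin d)
    (hx : 1 ≤ lead d n x) :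
    ltwDiagEntry d n x = ltwEigenvalue d n (n - lead d n x) := by
  rw [entry_eq_sum x, geom_nat hd hn hx (lead_le x)]
  unfold ltwEigenvalue
  have h1 : n - (n - lead d n x) = lead d n x := by
    have := lead_le (d := d) (n := n) x; omega
  rw [mul_assoc]
  congr 2
  rw [zpow_neg, zpow_neg, zpow_natCast, zpow_natCast]

lemma entry_zero (hn : 2 ≤ n) (x : Fin n → Fin d) (hx : lead d n x = 0) :
    ltwDiagEntry d n x = 0 := by
  rw [entry_eq_sum x, hx]
  simp

lemma eigen_pos (hd : 2 ≤ d) (hn : 2 ≤ n) {j : ℕ} (h1 : 1 ≤ j) (h2 : j ≤ n - 1) :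
    0 < ltwEigenvalue d n j := by
  have hd1 : (1 : ℝ) < d := by exact_mod_cast hd
  have hn1 : (1 : ℝ) < n := by exact_mod_cast hn
  unfold ltwEigenvalue
  have h3 : (d : ℝ) ^ (-(n : ℤ)) < (d : ℝ) ^ (-(j : ℤ)) :=
    zpow_lt_zpow_right₀ hd1 (by omega)
  have h4 : (0:ℝ) < 1 / ((n : ℝ) - 1) := div_pos one_pos (by linarith)
  have h5 : (0:ℝ) < (d : ℝ) / ((d : ℝ) - 1) := div_pos (by linarith) (by linarith)
  have h6 : (0:ℝ) < (d : ℝ) ^ (-(j : ℤ)) - (d : ℝ) ^ (-(n : ℤ)) := by linarith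
  exact mul_pos (mul_pos h4 h5) h6

lemma eigen_inj (hd : 2 ≤ d) (hn : 2 ≤ n) {j1 j2 : ℕ}
    (h : ltwEigenvalue d n j1 = ltwEigenvalue d n j2) : j1 = j2 := by
  have hd1 : (1 : ℝ) < d := by exact_mod_cast hd
  have hn1 : (1 : ℝ) < n := by exact_mod_cast hn
  unfold ltwEigenvalue at h
  have h4 : (0:ℝ) < 1 / ((n : ℝ) - 1) := div_pos one_pos (by linarith)
  have h5 : (0:ℝ) < (d : ℝ) / ((d : ℝ) - 1) := div_pos (by linarith) (by linarith)
  have h6 : (d : ℝ) ^ (-(j1 : ℤ)) = (d : ℝ) ^ (-(j2 : ℤ)) := by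
    have hne : (1 / ((n : ℝ) - 1)) * ((d : ℝ) / ((d : ℝ) - 1)) ≠ 0 :=
      ne_of_gt (mul_pos (div_pos one_pos (by linarith)) (div_pos (by linarith) (by linarith)))
    have := mul_left_cancel₀ hne h
    linarith
  have := zpow_right_injective₀ (by linarith : (0:ℝ) < d) (by linarith) h6
  omega

lemma entry_eq_iff (hd : 2 ≤ d) (hn : 2 ≤ n) {j : ℕ} (hj1 : 1 ≤ j) (hj2 : j ≤ n - 1)
    (x : Fin n → Fin d) :
    ltwDiagEntry d n x = ltwEigenvalue d n j ↔ lead d n x = n - j := by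
  constructor
  · intro h
    by_cases hx : 1 ≤ lead d n x
    · rw [entry_eq_eigen hd hn x hx] at h
      have := eigen_inj hd hn h
      have := lead_le (d := d) (n := n) x
      omega
    · exfalso
      rw [entry_zero hn x (by omega)] at h
      exact absurd h.symm (ne_of_gt (eigen_pos hd hn hj1 hj2))
  · intro h
    have hx : 1 ≤ lead d n x := by omega
    rw [entry_eq_eigen hd hn x hx, h]
    congr 1
    omega

lemma card_S (hd : 2 ≤ d) {m : ℕ} (hm : m ≤ n) :
    (Finset.univ.filter (fun x : Fin n → Fin d => leadZ d n x m)).card = d ^ (n - m) := by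
  have : (Finset.univ : Finset (Fin (n - m) → Fin d)).card = d ^ (n - m) := by
    simp
  rw [← this]
  refine Finset.card_bij' (fun x _ => fun j : Fin (n - m) => x ⟨m + j, by omega⟩)
    (fun y _ => fun i : Fin n => if h : (i : ℕ) < m then ⟨0, by omega⟩ else y ⟨i - m, by omega⟩)
    ?_ ?_ ?_ ?_
  · intro x hx; exact Finset.mem_univ _
  · intro y hy
    simp only [mem_filter, mem_univ, true_and]
    intro i hi
    dsimp only
    rw [dif_pos hi]
  · intro x hx
    simp only [mem_filter, mem_univ, true_and] at hx
    funext i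
    dsimp only
    by_cases hi : (i : ℕ) < m
    · rw [dif_pos hi]
      have := hx i hi
      exact (Fin.ext (by simpa using this.symm))
    · rw [dif_neg hi]
      congr 1
      exact Fin.ext (by simp; omega)
  · intro y hy
    funext j
    dsimp only
    rw [dif_neg (by simp)]
    congr 1
    exact Fin.ext (by simp)

lemma lead_eq_iff_top (x : Fin n → Fin d) (hn : 2 ≤ n) :
    lead d n x = n - 1 ↔ leadZ d n x (n - 1) := by
  constructor
  · intro h; exact (leadZ_iff_le_lead (by omega) le_rfl).2 (by omega)
  · intro h
    have h2 : n - 1 ≤ lead d n x := Nat.le_findGreatest le_rfl h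
    have := lead_le (d := d) (n := n) x
    omega

lemma lead_eq_iff_mid {m : ℕ} (hm1 : 1 ≤ m) (hm2 : m ≤ n - 2) (hn : 2 ≤ n)
    (x : Fin n → Fin d) :
    lead d n x = m ↔ leadZ d n x m ∧ ¬ leadZ d n x (m + 1) := by
  constructor
  · intro h
    refine ⟨(leadZ_iff_le_lead hm1 (by omega)).2 (by omega), ?_⟩
    intro hc
    have := (leadZ_iff_le_lead (by omega) (by omega)).1 hc
    omega
  · rintro ⟨h1, h2⟩
    have hle := (leadZ_iff_le_lead hm1 (by omega)).1 h1
    have : ¬ (m + 1 ≤ lead d n x) := fun hc =>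
      h2 ((leadZ_iff_le_lead (by omega) (by omega)).2 hc)
    omega

/-- For `d, n ≥ 2`, the nonzero spectrum of the diagonal density matrix
`ω = (1/(n-1)) Σ_{k=1}^{n-1} ψ^{⊗k} ⊗ φ^{⊗(n-k)}` on `M_d(ℂ)^{⊗n}` consists of the
eigenvalues `λ_j` for `j = 1, …, n-1`, where `λ_j` occurs with multiplicity
`m_j = (d-1)d^{j-1} + δ_{j,1}`. -/
theorem stmt4 (d n : ℕ) (hd : 2 ≤ d) (hn : 2 ≤ n) :
    (∀ x : Fin n → Fin d, ltwDiagEntry d n x ≠ 0 →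
        ∃ j ∈ Finset.Icc 1 (n - 1), ltwDiagEntry d n x = ltwEigenvalue d n j) ∧
      (∀ j ∈ Finset.Icc 1 (n - 1),
        0 < ltwEigenvalue d n j ∧
          Nat.card {x : Fin n → Fin d // ltwDiagEntry d n x = ltwEigenvalue d n j} =
            (d - 1) * d ^ (j - 1) + (if j = 1 then 1 else 0)) := by
  constructor
  · intro x hx
    have hl : 1 ≤ lead d n x := by
      by_contra h
      exact hx (entry_zero hn x (by omega))
    refine ⟨n - lead d n x, ?_, entry_eq_eigen hd hn x hl⟩
    have := lead_le (d := d) (n := n) x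
    simp only [Finset.mem_Icc]
    omega
  · intro j hj
    simp only [Finset.mem_Icc] at hj
    obtain ⟨hj1, hj2⟩ := hj
    refine ⟨eigen_pos hd hn hj1 hj2, ?_⟩
    have hiff : ∀ x : Fin n → Fin d,
        ltwDiagEntry d n x = ltwEigenvalue d n j ↔ lead d n x = n - j :=
      fun x => entry_eq_iff hd hn hj1 hj2 x
    rw [Nat.card_congr (Equiv.subtypeEquivRight hiff), Nat.card_eq_fintype_card,
      Fintype.card_subtype]
    by_cases hj' : j = 1
    · subst hj'
      have hset : (Finset.univ.filter (fun x : Fin n → Fin d => lead d n x = n - 1)) =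
          Finset.univ.filter (fun x => leadZ d n x (n - 1)) :=
        Finset.filter_congr fun x _ => by simp [lead_eq_iff_top x hn]
      rw [hset, card_S hd (by omega)]
      have h1 : n - (n - 1) = 1 := by omega
      rw [h1]
      simp
      omega
    · have hm1 : 1 ≤ n - j := by omega
      have hm2 : n - j ≤ n - 2 := by omega
      have hset : (Finset.univ.filter (fun x : Fin n → Fin d => lead d n x = n - j)) =
          Finset.univ.filter (fun x => leadZ d n x (n - j)) \
            Finset.univ.filter (fun x => leadZ d n x (n - j + 1)) := by
        ext x
        simp only [Finset.mem_filter, Finset.mem_univ, true_and, Finset.mem_sdiff,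
          lead_eq_iff_mid hm1 hm2 hn x]
      rw [hset, Finset.card_sdiff_of_subset]
      · rw [card_S hd (by omega), card_S hd (by omega)]
        have e1 : n - (n - j) = j := by omega
        have e2 : n - (n - j + 1) = j - 1 := by omega
        rw [e1, e2, if_neg hj']
        have h3 : d ^ j = d * d ^ (j - 1) := by
          rw [← pow_succ']; congr 1; omega
        calc d ^ j - d ^ (j - 1) = d * d ^ (j - 1) - 1 * d ^ (j - 1) := by
              rw [h3, one_mul]
          _ = (d - 1) * d ^ (j - 1) := (Nat.sub_mul d 1 _).symm
          _ = (d - 1) * d ^ (j - 1) + 0 := by omega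
      · intro x hx
        simp only [Finset.mem_filter, Finset.mem_univ, true_and] at hx ⊢
        exact leadZ_anti (by omega) hx
end

section
/- Let ψ and φ be density matrices on a finite-dimensional Hilbert space H (i.e., positive semidefinite operators with trace 1), let n ≥ 2, and define ω = (1/(n−1)) Σ_{k=1}^{n−1} ψ^{⊗k} ⊗ φ^{⊗(n−k)} on H^{⊗n}. Let u be the unitary on H^{⊗(n+1)} cyclically permuting the n+1 tensor factors. Then ‖u(ψ ⊗ ω)u* − φ ⊗ ω‖₁ ≤ 2/(n−1), where ‖·‖₁ is the trace norm. -/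
open Matrix
open scoped ComplexOrder

/-- The trace norm (Schatten 1-norm) of a complex square matrix: `tr √(Mᴴ M)`. -/
noncomputable def traceNorm {n : Type*} [Fintype n] [DecidableEq n]
    (M : Matrix n n ℂ) : ℝ :=
  (((Matrix.posSemidef_conjTranspose_mul_self M).1.eigenvectorUnitary.1 *
      diagonal (((↑) : ℝ → ℂ) ∘ (√·) ∘ (Matrix.posSemidef_conjTranspose_mul_self M).1.eigenvalues) *
      (star (Matrix.posSemidef_conjTranspose_mul_self M).1.eigenvectorUnitary : Matrix n n ℂ)).trace).re

/-- The `n`-fold tensor product matrix `ψ^{⊗k} ⊗ φ^{⊗(n-k)}` on `H^{⊗n}`,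
`H = ℂ^D`, realized on the index set `Fin n → Fin D`. -/
noncomputable def tensorMix (D n k : ℕ) (ψ φ : Matrix (Fin D) (Fin D) ℂ) :
    Matrix (Fin n → Fin D) (Fin n → Fin D) ℂ :=
  Matrix.of fun x y => ∏ i : Fin n, (if (i : ℕ) < k then ψ (x i) (y i) else φ (x i) (y i))

/-- The catalyst `ω = (1/(n-1)) Σ_{k=1}^{n-1} ψ^{⊗k} ⊗ φ^{⊗(n-k)}`. -/
noncomputable def catalyst (D n : ℕ) (ψ φ : Matrix (Fin D) (Fin D) ℂ) :
    Matrix (Fin n → Fin D) (Fin n → Fin D) ℂ :=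
  (1 / ((n : ℂ) - 1)) • ∑ k ∈ Finset.Icc 1 (n - 1), tensorMix D n k ψ φ

/-!
Conjugating `ψ ⊗ ψ^{⊗k} ⊗ φ^{⊗(n-k)}` by the cyclic shift gives `φ ⊗ ψ^{⊗(k+1)} ⊗ φ^{⊗(n-k-1)}`,
which is the `(k+1)`-st summand of `φ ⊗ ω` up to the factor `1/(n-1)`. Hence the difference
telescopes to `(1/(n-1)) (ρₙ - ρ₁)` with `ρₘ = φ ⊗ ψ^{⊗m} ⊗ φ^{⊗(n-m)}` a density matrix, and
`‖ρ - σ‖₁ ≤ tr ρ + tr σ = 2` for positive `ρ, σ`.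
-/

open scoped MatrixOrder

section TraceNorm

variable {m : Type*} [Fintype m] [DecidableEq m]

lemma traceNorm_eq_re_trace_abs (M : Matrix m m ℂ) : traceNorm M = (CFC.abs M).trace.re := by
  have hN := posSemidef_conjTranspose_mul_self M
  rw [CFC.abs, star_eq_conjTranspose, CFC.sqrt_eq_cfc, cfc_nnreal_eq_real _ (Mᴴ * M),
    hN.1.cfc_eq, traceNorm]
  simp only [IsHermitian.cfc, Unitary.conjStarAlgAut_apply]
  congr 5
  funext i
  simp [max_eq_left (hN.eigenvalues_nonneg i)]

lemma re_trace_mul_nonneg {X Y : Matrix m m ℂ} (hX : 0 ≤ X) (hY : Y.PosSemidef) :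
    0 ≤ (X * Y).trace.re := by
  have hconj : (X * Y).trace = (CFC.sqrt X * Y * CFC.sqrt X).trace := by
    rw [trace_mul_cycle, CFC.sqrt_mul_sqrt_self X hX]
  have hpsd := hY.mul_mul_conjTranspose_same (CFC.sqrt X)
  rw [(CFC.sqrt_nonneg X).posSemidef.1.eq] at hpsd
  rw [hconj]
  exact (Complex.le_def.mp hpsd.trace_nonneg).1

lemma re_trace_mul_le {S A : Matrix m m ℂ} (hS : S ≤ 1) (hA : A.PosSemidef) :
    (S * A).trace.re ≤ A.trace.re := by
  have := re_trace_mul_nonneg (sub_nonneg.mpr hS) hA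
  rwa [Matrix.sub_mul, Matrix.one_mul, trace_sub, Complex.sub_re, sub_nonneg] at this

/-- With `S` the sign of `A - B`, `|A - B| = S (A - B)`, and `-1 ≤ S ≤ 1` bounds `tr (S A)` by
`tr A` and `-tr (S B)` by `tr B`. -/
theorem traceNorm_sub_le {A B : Matrix m m ℂ} (hA : A.PosSemidef) (hB : B.PosSemidef) :
    traceNorm (A - B) ≤ A.trace.re + B.trace.re := by
  have hM : IsSelfAdjoint (A - B) := (hA.1.sub hB.1).isSelfAdjoint
  set S := cfc (fun x : ℝ => (SignType.sign x : ℝ)) (A - B)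
  have hcont : ContinuousOn (fun x : ℝ => (SignType.sign x : ℝ)) (spectrum ℝ (A - B)) :=
    (A - B).finite_real_spectrum.continuousOn _
  have habs : CFC.abs (A - B) = S * (A - B) := by
    rw [CFC.abs_eq_cfc_norm _ hM]
    conv_rhs => rw [← cfc_id' ℝ (A - B)]
    rw [← cfc_mul _ _ (A - B)]
    simp [sign_mul_self]
  have hS : S ≤ 1 := cfc_le_one _ _ fun x _ => by
    rcases lt_trichotomy x 0 with h | h | h <;> simp [h]
  have hnegS : -S ≤ 1 := by
    rw [← cfc_neg]
    exact cfc_le_one _ _ fun x _ => by rcases lt_trichotomy x 0 with h | h | h <;> simp [h]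
  have h1 := re_trace_mul_le hS hA
  have h2 := re_trace_mul_le hnegS hB
  rw [traceNorm_eq_re_trace_abs, habs, Matrix.mul_sub, trace_sub, Complex.sub_re]
  rw [Matrix.neg_mul, trace_neg, Complex.neg_re] at h2
  linarith

lemma traceNorm_smul_of_nonneg {r : ℝ} (hr : 0 ≤ r) (M : Matrix m m ℂ) :
    traceNorm ((r : ℂ) • M) = r * traceNorm M := by
  rw [traceNorm_eq_re_trace_abs, traceNorm_eq_re_trace_abs, CFC.abs_smul, trace_smul]
  simp [abs_of_nonneg hr]

end TraceNorm

section PiTensor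

variable {ι κ R : Type*} [Fintype ι] [CommSemiring R]

/-- The tensor product `⨂ᵢ f i` of a family of square matrices, on the index set `ι → κ`. -/
def piTensor (f : ι → Matrix κ κ R) : Matrix (ι → κ) (ι → κ) R :=
  of fun x y => ∏ i, f i (x i) (y i)

lemma trace_piTensor [DecidableEq ι] [Fintype κ] (f : ι → Matrix κ κ R) :
    (piTensor f).trace = ∏ i, (f i).trace := by
  simp only [trace, diag_apply, piTensor, of_apply]
  rw [Finset.prod_univ_sum, Fintype.piFinset_univ]

lemma submatrix_piTensor_comp (f : ι → Matrix κ κ R) (σ : ι ≃ ι) :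
    (piTensor (f ∘ σ)).submatrix (· ∘ σ) (· ∘ σ) = piTensor f := by
  ext x y
  exact σ.prod_comp fun i => f i (x i) (y i)

lemma of_mul_piTensor_succ {N : ℕ} (g : Matrix κ κ R) (f : Fin N → Matrix κ κ R) :
    (of fun x y : Fin (N + 1) → κ =>
        g (x 0) (y 0) * piTensor f (fun i => x i.succ) (fun i => y i.succ))
      = piTensor (Fin.cons g f) := by
  ext x y
  simp [piTensor, Fin.prod_univ_succ]

lemma posSemidef_piTensor [DecidableEq ι] [Fintype κ] [DecidableEq κ] {f : ι → Matrix κ κ ℂ}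
    (hf : ∀ i, (f i).PosSemidef) :
    (piTensor f).PosSemidef := by
  choose A hA using fun i => CStarAlgebra.nonneg_iff_eq_star_mul_self.mp (hf i).nonneg
  rw [← nonneg_iff_posSemidef, CStarAlgebra.nonneg_iff_eq_star_mul_self]
  refine ⟨piTensor A, ?_⟩
  ext x y
  simp only [piTensor, hA, star_eq_conjTranspose, mul_apply, conjTranspose_apply, of_apply,
    Finset.prod_univ_sum, Fintype.piFinset_univ, Finset.prod_mul_distrib, star_prod]

end PiTensor

/-- `φ ⊗ ψ^{⊗m} ⊗ φ^{⊗(n-m)}` on `H^{⊗(n+1)}`. -/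
noncomputable def boundaryMix (D n m : ℕ) (ψ φ : Matrix (Fin D) (Fin D) ℂ) :
    Matrix (Fin (n + 1) → Fin D) (Fin (n + 1) → Fin D) ℂ :=
  piTensor fun j : Fin (n + 1) => if 1 ≤ (j : ℕ) ∧ (j : ℕ) ≤ m then ψ else φ

section Catalyst

variable {D n : ℕ} {ψ φ : Matrix (Fin D) (Fin D) ℂ}

lemma tensorMix_eq_piTensor (k : ℕ) :
    tensorMix D n k ψ φ = piTensor fun i : Fin n => if (i : ℕ) < k then ψ else φ := by
  ext x y
  simp only [tensorMix, piTensor, of_apply]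
  refine Finset.prod_congr rfl fun i _ => ?_
  split_ifs <;> rfl

lemma of_mul_tensorMix (k : ℕ) :
    (of fun x y : Fin (n + 1) → Fin D =>
        φ (x 0) (y 0) * tensorMix D n k ψ φ (fun i => x i.succ) (fun i => y i.succ))
      = boundaryMix D n k ψ φ := by
  rw [tensorMix_eq_piTensor, of_mul_piTensor_succ, boundaryMix]
  congr 1
  funext j
  cases j using Fin.cases <;> simp

lemma of_mul_tensorMix_rotate {k : ℕ} (hk : k < n) :
    (of fun x y : Fin (n + 1) → Fin D =>
        ψ (x (0 + 1)) (y (0 + 1)) *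
          tensorMix D n k ψ φ (fun i => x (i.succ + 1)) (fun i => y (i.succ + 1)))
      = boundaryMix D n (k + 1) ψ φ := by
  set F := fun j : Fin (n + 1) => if 1 ≤ (j : ℕ) ∧ (j : ℕ) ≤ k + 1 then ψ else φ
  have hF : Fin.cons ψ (fun i : Fin n => if (i : ℕ) < k then ψ else φ) =
      F ∘ finRotate (n + 1) := by
    funext j
    cases j using Fin.cases with
    | zero =>
      simp [F, Nat.mod_eq_of_lt (show 1 < n + 1 by omega)]
    | succ i =>
      simp only [F, Fin.cons_succ, Function.comp_apply, finRotate_apply, Fin.val_add, Fin.val_succ]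
      refine if_congr ?_ rfl rfl
      rw [Fin.val_one', Nat.mod_eq_of_lt (show 1 < n + 1 by omega)]
      rcases Nat.lt_or_ge ((i : ℕ) + 1 + 1) (n + 1) with h | h
      · rw [Nat.mod_eq_of_lt h]
        omega
      · rw [show (i : ℕ) + 1 + 1 = n + 1 by omega, Nat.mod_self]
        omega
  rw [boundaryMix, ← submatrix_piTensor_comp F (finRotate (n + 1)), ← hF, ← of_mul_piTensor_succ,
    ← tensorMix_eq_piTensor]
  ext x y
  simp

lemma posSemidef_boundaryMix (hψ : ψ.PosSemidef) (hφ : φ.PosSemidef) (m : ℕ) :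
    (boundaryMix D n m ψ φ).PosSemidef :=
  posSemidef_piTensor fun j => by split_ifs <;> assumption

lemma trace_boundaryMix (hψ : ψ.trace = 1) (hφ : φ.trace = 1) (m : ℕ) :
    (boundaryMix D n m ψ φ).trace = 1 := by
  rw [boundaryMix, trace_piTensor]
  exact Finset.prod_eq_one fun j _ => by split_ifs <;> assumption

lemma of_mul_catalyst_comp {α : Type*} (c : α → α → ℂ) (p : α → Fin n → Fin D) :
    (of fun x y => c x y * catalyst D n ψ φ (p x) (p y))
      = (1 / ((n : ℂ) - 1)) • ∑ k ∈ Finset.Icc 1 (n - 1),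
          of fun x y => c x y * tensorMix D n k ψ φ (p x) (p y) := by
  ext x y
  simp only [catalyst, of_apply, Matrix.smul_apply, Matrix.sum_apply, smul_eq_mul, Finset.mul_sum]
  exact Finset.sum_congr rfl fun k _ => by ring

lemma of_mul_catalyst :
    (of fun x y : Fin (n + 1) → Fin D =>
        φ (x 0) (y 0) * catalyst D n ψ φ (fun i => x i.succ) (fun i => y i.succ))
      = (1 / ((n : ℂ) - 1)) • ∑ k ∈ Finset.Icc 1 (n - 1), boundaryMix D n k ψ φ := by
  rw [of_mul_catalyst_comp (fun x y : Fin (n + 1) → Fin D => φ (x 0) (y 0)) (fun x i => x i.succ)]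
  simp only [of_mul_tensorMix]

lemma of_mul_catalyst_rotate :
    (of fun x y : Fin (n + 1) → Fin D =>
        ψ (x (0 + 1)) (y (0 + 1)) *
          catalyst D n ψ φ (fun i => x (i.succ + 1)) (fun i => y (i.succ + 1)))
      = (1 / ((n : ℂ) - 1)) • ∑ k ∈ Finset.Icc 1 (n - 1), boundaryMix D n (k + 1) ψ φ := by
  rw [of_mul_catalyst_comp (fun x y : Fin (n + 1) → Fin D => ψ (x (0 + 1)) (y (0 + 1)))
    (fun x i => x (i.succ + 1))]
  congr 1
  refine Finset.sum_congr rfl fun k hk => of_mul_tensorMix_rotate ?_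
  rw [Finset.mem_Icc] at hk
  omega

end Catalyst

/-- For density matrices `ψ, φ` on a finite-dimensional Hilbert space `H = ℂ^D`
and `n ≥ 2`, with `ω = (1/(n-1)) Σ_{k=1}^{n-1} ψ^{⊗k} ⊗ φ^{⊗(n-k)}` and `u` the unitary on
`H^{⊗(n+1)}` cyclically permuting the `n+1` tensor factors,
`‖u (ψ ⊗ ω) u* - φ ⊗ ω‖₁ ≤ 2/(n-1)`.  (Here `u (ψ ⊗ ω) u*` is realized by composing the
index functions with the cyclic shift `i ↦ i + 1` on `Fin (n+1)`.) -/
theorem stmt5 (D n : ℕ) (hn : 2 ≤ n)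
    (ψ φ : Matrix (Fin D) (Fin D) ℂ)
    (hψ : ψ.PosSemidef) (hψtr : ψ.trace = 1)
    (hφ : φ.PosSemidef) (hφtr : φ.trace = 1) :
    traceNorm
      ((Matrix.of fun x y : Fin (n + 1) → Fin D =>
          ψ (x (0 + 1)) (y (0 + 1)) *
            catalyst D n ψ φ (fun i => x (i.succ + 1)) (fun i => y (i.succ + 1))) -
        (Matrix.of fun x y : Fin (n + 1) → Fin D =>
          φ (x 0) (y 0) *
            catalyst D n ψ φ (fun i => x i.succ) (fun i => y i.succ))) ≤
      2 / ((n : ℝ) - 1) := by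
  have hr : 0 ≤ 1 / ((n : ℝ) - 1) := by
    have : (2 : ℝ) ≤ n := by exact_mod_cast hn
    exact div_nonneg zero_le_one (by linarith)
  have hcast : 1 / ((n : ℂ) - 1) = ((1 / ((n : ℝ) - 1) : ℝ) : ℂ) := by push_cast; rfl
  rw [of_mul_catalyst_rotate, of_mul_catalyst, ← smul_sub, ← Finset.sum_sub_distrib,
    Finset.sum_Icc_sub (by omega) (boundaryMix D n · ψ φ), Nat.sub_add_cancel (by omega), hcast,
    traceNorm_smul_of_nonneg hr]
  calc 1 / ((n : ℝ) - 1) * traceNorm (boundaryMix D n n ψ φ - boundaryMix D n 1 ψ φ)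
      ≤ 1 / ((n : ℝ) - 1) *
          ((boundaryMix D n n ψ φ).trace.re + (boundaryMix D n 1 ψ φ).trace.re) :=
        mul_le_mul_of_nonneg_left
          (traceNorm_sub_le (posSemidef_boundaryMix hψ hφ n) (posSemidef_boundaryMix hψ hφ 1)) hr
    _ = 2 / ((n : ℝ) - 1) := by
        rw [trace_boundaryMix hψtr hφtr, trace_boundaryMix hψtr hφtr, Complex.one_re]
        ring
end

section
/- For each n ∈ ℕ let h_n = Σ_{j=1}^{n} 1/j be the n-th harmonic number, and define the state φ^{(n)} on M_{2^n}(ℂ) by the density matrix (1/h_{2^n})·diag(1, 1/2, …, 1/2^n). View M_{2^m}(ℂ) embedded into M_{2^n}(ℂ) (n ≥ m) block-diagonally as a ↦ diag(a, a, …, a) with 2^{n−m} blocks. Then for every fixed m and every a ∈ M_{2^m}(ℂ), the restricted states converge to the normalized trace: lim_{n→∞} φ^{(n)}(diag(a,…,a)) = (1/2^m)·tr(a). -/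
open Filter

/-- The `n`-th harmonic number `h n = Σ_{j=1}^n 1/j`. -/
noncomputable def harmonic' (n : ℕ) : ℝ := ∑ j ∈ Finset.range n, 1 / ((j : ℝ) + 1)

lemma harmonic'_nonneg (n : ℕ) : 0 ≤ harmonic' n :=
  Finset.sum_nonneg fun j _ => by positivity

lemma harmonic'_pos {n : ℕ} (hn : 0 < n) : 0 < harmonic' n := by
  unfold harmonic'
  apply Finset.sum_pos (fun j _ => by positivity)
  exact ⟨0, Finset.mem_range.2 hn⟩

lemma harmonic'_mono : Monotone harmonic' := fun i j h =>
  Finset.sum_le_sum_of_subset_of_nonneg (Finset.range_subset_range.2 h) (fun k _ _ => by positivity)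

lemma harmonic'_tendsto : Tendsto harmonic' atTop atTop := by
  have := Real.tendsto_sum_range_one_div_nat_succ_atTop
  unfold harmonic'
  convert this using 2 with n

lemma harmonic'_diff {L N : ℕ} (hL : 0 < L) (hN : N = 2 ^ m * L) :
    harmonic' N - harmonic' L ≤ 2 ^ m := by
  have hLN : L ≤ N := by
    rw [hN]; exact Nat.le_mul_of_pos_left _ (by positivity)
  unfold harmonic'
  rw [← Finset.sum_Ico_eq_sub _ hLN]
  have : ∀ j ∈ Finset.Ico L N, (1 : ℝ) / (j + 1) ≤ 1 / L := by
    intro j hj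
    have hj' := (Finset.mem_Ico.1 hj).1
    apply one_div_le_one_div_of_le (by exact_mod_cast hL)
    have : (L : ℝ) ≤ j := by exact_mod_cast hj'
    linarith
  calc ∑ j ∈ Finset.Ico L N, (1:ℝ) / (j + 1) ≤ (Finset.Ico L N).card • ((1:ℝ)/L) :=
        Finset.sum_le_card_nsmul _ _ _ this
    _ = (N - L : ℕ) * (1 / L) := by rw [Nat.card_Ico]; simp
    _ ≤ 2 ^ m := by
        have hLr : (0:ℝ) < L := by exact_mod_cast hL
        rw [Nat.cast_sub hLN, hN]
        push_cast
        rw [mul_one_div, div_le_iff₀ hLr]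
        nlinarith [hLr]

lemma key (m k : ℕ) (hk : k < 2 ^ m) :
    Tendsto (fun n : ℕ => (1 / harmonic' (2 ^ n)) *
      ∑ l ∈ Finset.range (2 ^ (n - m)), 1 / ((l * 2 ^ m + k + 1 : ℕ) : ℝ))
      atTop (nhds (1 / 2 ^ m)) := by
  rw [← tendsto_sub_nhds_zero_iff]
  apply squeeze_zero_norm' (a := fun n => 2 / harmonic' (2 ^ n))
  · filter_upwards [eventually_ge_atTop m] with n hn
    set L := 2 ^ (n - m) with hLdef
    set N := 2 ^ n with hNdef
    have hNL : N = 2 ^ m * L := by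
      rw [hLdef, hNdef, ← pow_add]
      congr 1
      omega
    have hLpos : 0 < L := Nat.pow_pos (by norm_num)
    have hNpos : 0 < N := Nat.pow_pos (by norm_num)
    have hH : 0 < harmonic' N := harmonic'_pos hNpos
    have hc : (0:ℝ) < 2 ^ m := by positivity
    set S := ∑ l ∈ Finset.range L, 1 / ((l * 2 ^ m + k + 1 : ℕ) : ℝ) with hS
    -- lower bound
    have hlow : harmonic' L / 2 ^ m ≤ S := by
      rw [hS]
      unfold harmonic'
      rw [Finset.sum_div]
      apply Finset.sum_le_sum
      intro l _
      rw [div_div]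
      apply one_div_le_one_div_of_le (by positivity)
      push_cast
      have : (k : ℝ) + 1 ≤ 2 ^ m := by exact_mod_cast hk
      nlinarith
    -- upper bound
    have hup : S ≤ 1 + harmonic' L / 2 ^ m := by
      rw [hS]
      obtain ⟨L', hL'⟩ : ∃ L', L = L' + 1 := ⟨L - 1, by omega⟩
      rw [hL', Finset.sum_range_succ']
      have h1 : (1:ℝ) / ((0 * 2 ^ m + k + 1 : ℕ) : ℝ) ≤ 1 := by
        rw [zero_mul, zero_add]
        apply div_le_one_of_le₀
        · exact_mod_cast Nat.one_le_iff_ne_zero.2 (by omega)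
        · positivity
      have h2 : ∑ l ∈ Finset.range L', (1:ℝ) / (((l+1) * 2 ^ m + k + 1 : ℕ) : ℝ)
          ≤ harmonic' (L' + 1) / 2 ^ m := by
        have : harmonic' L' / 2 ^ m ≤ harmonic' (L' + 1) / 2 ^ m := by
          apply div_le_div_of_nonneg_right (harmonic'_mono (Nat.le_succ _)) hc.le
        refine le_trans ?_ this
        unfold harmonic'
        rw [Finset.sum_div]
        apply Finset.sum_le_sum
        intro l _
        rw [div_div]
        apply one_div_le_one_div_of_le (by positivity)
        push_cast
        nlinarith
      linarith
    have hdiff : harmonic' N - harmonic' L ≤ 2 ^ m := harmonic'_diff hLpos hNL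
    have hmonoLN : harmonic' L ≤ harmonic' N := harmonic'_mono (by rw [hNL]; exact Nat.le_mul_of_pos_left _ (by positivity))
    -- |1/H * S - 1/2^m| ≤ 2 / H
    have e : 1 / harmonic' N * S - 1 / 2 ^ m = (S - harmonic' N / 2 ^ m) / harmonic' N := by
      field_simp
    have hmid : |S - harmonic' N / 2 ^ m| ≤ 2 := by
      rw [abs_le]
      have h1 : harmonic' L / 2 ^ m ≤ harmonic' N / 2 ^ m :=
        div_le_div_of_nonneg_right hmonoLN hc.le
      have h2 : harmonic' N / 2 ^ m - harmonic' L / 2 ^ m ≤ 1 := by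
        rw [div_sub_div_same, div_le_one hc]; linarith
      constructor <;> linarith
    have key : |1 / harmonic' N * S - 1 / 2 ^ m| ≤ 2 / harmonic' N := by
      rw [e, abs_div, abs_of_pos hH]
      exact div_le_div_of_nonneg_right hmid hH.le
    simpa using key
  · apply Tendsto.div_atTop tendsto_const_nhds
    exact harmonic'_tendsto.comp (tendsto_pow_atTop_atTop_of_one_lt (by norm_num))

/-- With `φ^{(n)}` the state on `M_{2^n}(ℂ)` with density matrix
`(1/h_{2^n})·diag(1, 1/2, …, 1/2^n)` and `a ∈ M_{2^m}(ℂ)` embedded block-diagonally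
(so `φ^{(n)}(diag(a,…,a)) = (1/h_{2^n}) Σ_{l=1}^{2^{n-m}} Σ_{k=1}^{2^m} a_{kk}/((l-1)2^m+k)`),
the values converge to the normalized trace: `lim_{n→∞} φ^{(n)}(diag(a,…,a)) = 2^{-m} tr a`. -/
theorem stmt6 (m : ℕ) (a : Matrix (Fin (2 ^ m)) (Fin (2 ^ m)) ℂ) :
    Tendsto
      (fun n : ℕ =>
        (1 / (harmonic' (2 ^ n) : ℂ)) *
          ∑ l ∈ Finset.range (2 ^ (n - m)), ∑ k : Fin (2 ^ m),
            a k k / ((l * 2 ^ m + (k : ℕ) + 1 : ℕ) : ℂ))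
      atTop (nhds ((1 / (2 ^ m : ℂ)) * a.trace)) := by
  have heq : ∀ n : ℕ,
      (1 / (harmonic' (2 ^ n) : ℂ)) *
        ∑ l ∈ Finset.range (2 ^ (n - m)), ∑ k : Fin (2 ^ m),
          a k k / ((l * 2 ^ m + (k : ℕ) + 1 : ℕ) : ℂ)
      = ∑ k : Fin (2 ^ m), a k k *
          ((((1 / harmonic' (2 ^ n)) *
            ∑ l ∈ Finset.range (2 ^ (n - m)), 1 / ((l * 2 ^ m + (k : ℕ) + 1 : ℕ) : ℝ) : ℝ)) : ℂ) := by
    intro n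
    rw [Finset.sum_comm, Finset.mul_sum]
    apply Finset.sum_congr rfl
    intro k _
    push_cast
    rw [Finset.mul_sum, Finset.mul_sum, Finset.mul_sum]
    ring_nf
    apply Finset.sum_congr rfl
    intro l _
    ring
  simp_rw [heq]
  have htr : (1 / (2 ^ m : ℂ)) * a.trace
      = ∑ k : Fin (2 ^ m), a k k * (((1 / 2 ^ m : ℝ)) : ℂ) := by
    rw [Matrix.trace, Finset.mul_sum]
    apply Finset.sum_congr rfl
    intro k _
    push_cast
    rw [Matrix.diag_apply]
    ring
  rw [htr]
  apply tendsto_finset_sum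
  intro k _
  apply Tendsto.const_mul
  exact (Complex.continuous_ofReal.tendsto _).comp (key m k k.isLt)
end

section
/- For positive definite a ∈ M_{2^m}(ℂ) (or more generally positive semidefinite), the sandwich bound h_{2^{n−m}}·(1/2^m)·tr(a) ≤ h_{2^n}·φ^{(n)}(diag(a,…,a)) ≤ (2^m + h_{2^{n−m}})·(1/2^m)·tr(a) holds, where φ^{(n)}(b) = (1/h_{2^n}) Σ_{j=1}^{2^n} b_{jj}/j and diag(a,…,a) is the 2^{n−m}-fold block diagonal embedding. -/
open scoped ComplexOrder

/-- For positive semidefinite `a ∈ M_{2^m}(ℂ)` and `n ≥ m`, the sandwich bound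
`h_{2^{n-m}}·2^{-m}·tr a ≤ h_{2^n}·φ^{(n)}(diag(a,…,a)) ≤ (2^m + h_{2^{n-m}})·2^{-m}·tr a`
holds, where `h_{2^n}·φ^{(n)}(diag(a,…,a)) = Σ_{l=1}^{2^{n-m}} Σ_{k=1}^{2^m} a_{kk}/((l-1)2^m+k)`. -/
theorem stmt7 (m n : ℕ) (hmn : m ≤ n)
    (a : Matrix (Fin (2 ^ m)) (Fin (2 ^ m)) ℂ) (ha : a.PosSemidef) :
    harmonic' (2 ^ (n - m)) * ((1 / (2 ^ m : ℝ)) * a.trace.re) ≤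
        (∑ l ∈ Finset.range (2 ^ (n - m)), ∑ k : Fin (2 ^ m),
          (a k k).re / ((l * 2 ^ m + (k : ℕ) + 1 : ℕ) : ℝ)) ∧
      (∑ l ∈ Finset.range (2 ^ (n - m)), ∑ k : Fin (2 ^ m),
          (a k k).re / ((l * 2 ^ m + (k : ℕ) + 1 : ℕ) : ℝ)) ≤
        ((2 ^ m : ℝ) + harmonic' (2 ^ (n - m))) * ((1 / (2 ^ m : ℝ)) * a.trace.re) := by
  have hc : ∀ k, 0 ≤ (a k k).re := fun k => by
    have := ha.re_dotProduct_nonneg (Pi.single k 1)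
    simpa [dotProduct, Matrix.mulVec, Pi.single_apply, Finset.sum_ite_eq] using this
  have htr : a.trace.re = ∑ k, (a k k).re := by
    simp [Matrix.trace, Matrix.diag, Complex.re_sum]
  have hM0 : (0:ℝ) < (2:ℝ) ^ m := by positivity
  have hT0 : 0 ≤ a.trace.re := by
    rw [htr]; exact Finset.sum_nonneg fun k _ => hc k
  have hkM : ∀ k : Fin (2 ^ m), ((k:ℕ) : ℝ) + 1 ≤ (2:ℝ) ^ m := fun k => by
    have h := Nat.succ_le_of_lt k.isLt
    exact_mod_cast h
  constructor
  · -- lower bound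
    have lhs_eq : harmonic' (2 ^ (n - m)) * (1 / (2:ℝ) ^ m * a.trace.re) =
        ∑ l ∈ Finset.range (2 ^ (n - m)), ∑ k : Fin (2 ^ m),
          (a k k).re / (((l:ℝ) + 1) * 2 ^ m) := by
      rw [harmonic', Finset.sum_mul]
      refine Finset.sum_congr rfl fun l _ => ?_
      rw [← Finset.sum_div, ← htr]
      have hl0 : ((l:ℝ) + 1) ≠ 0 := by positivity
      field_simp
      try ring
    rw [lhs_eq]
    refine Finset.sum_le_sum fun l _ => Finset.sum_le_sum fun k _ => ?_
    have hd0 : (0:ℝ) < ((l * 2 ^ m + (k:ℕ) + 1 : ℕ) : ℝ) := by positivity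
    have hle : ((l * 2 ^ m + (k:ℕ) + 1 : ℕ) : ℝ) ≤ ((l:ℝ) + 1) * 2 ^ m := by
      push_cast
      nlinarith [hkM k]
    exact div_le_div_of_nonneg_left (hc k) hd0 hle
  · -- upper bound
    have step1 : (∑ l ∈ Finset.range (2 ^ (n - m)), ∑ k : Fin (2 ^ m),
          (a k k).re / ((l * 2 ^ m + (k:ℕ) + 1 : ℕ) : ℝ)) ≤
        ∑ l ∈ Finset.range (2 ^ (n - m)), a.trace.re / ((l * 2 ^ m + 1 : ℕ) : ℝ) := by
      refine Finset.sum_le_sum fun l _ => ?_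
      have h1 : ∑ k : Fin (2 ^ m), (a k k).re / ((l * 2 ^ m + (k:ℕ) + 1 : ℕ) : ℝ) ≤
          ∑ k : Fin (2 ^ m), (a k k).re / ((l * 2 ^ m + 1 : ℕ) : ℝ) := by
        refine Finset.sum_le_sum fun k _ => ?_
        have hd0 : (0:ℝ) < ((l * 2 ^ m + 1 : ℕ) : ℝ) := by positivity
        have hle : ((l * 2 ^ m + 1 : ℕ) : ℝ) ≤ ((l * 2 ^ m + (k:ℕ) + 1 : ℕ) : ℝ) := by
          exact_mod_cast Nat.add_le_add (Nat.le_add_right _ _) le_rfl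
        exact div_le_div_of_nonneg_left (hc k) hd0 hle
      refine h1.trans_eq ?_
      rw [← Finset.sum_div, ← htr]
    refine step1.trans ?_
    have hN1 : 1 ≤ 2 ^ (n - m) := Nat.one_le_two_pow
    obtain ⟨N', hN'⟩ : ∃ N', 2 ^ (n - m) = N' + 1 := ⟨2 ^ (n - m) - 1, by omega⟩
    have hrw : (∑ l ∈ Finset.range (2 ^ (n - m)), a.trace.re / ((l * 2 ^ m + 1 : ℕ) : ℝ)) =
        (∑ i ∈ Finset.range N', a.trace.re / (((i + 1) * 2 ^ m + 1 : ℕ) : ℝ)) + a.trace.re := by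
      rw [hN', Finset.sum_range_succ']
      norm_num
    rw [hrw]
    have hrest : (∑ i ∈ Finset.range N', a.trace.re / (((i + 1) * 2 ^ m + 1 : ℕ) : ℝ)) ≤
        harmonic' (2 ^ (n - m)) * (1 / (2:ℝ) ^ m * a.trace.re) := by
      have h2 : (∑ i ∈ Finset.range N', a.trace.re / (((i + 1) * 2 ^ m + 1 : ℕ) : ℝ)) ≤
          ∑ i ∈ Finset.range N', 1 / ((i:ℝ) + 1) * (1 / (2:ℝ) ^ m * a.trace.re) := by
        refine Finset.sum_le_sum fun i _ => ?_
        have heq : 1 / ((i:ℝ) + 1) * (1 / (2:ℝ) ^ m * a.trace.re) =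
            a.trace.re / (((i:ℝ) + 1) * 2 ^ m) := by
          have : ((i:ℝ) + 1) ≠ 0 := by positivity
          field_simp
        rw [heq]
        have hd0 : (0:ℝ) < ((i:ℝ) + 1) * 2 ^ m := by positivity
        have hle : ((i:ℝ) + 1) * 2 ^ m ≤ (((i + 1) * 2 ^ m + 1 : ℕ) : ℝ) := by
          push_cast; linarith
        exact div_le_div_of_nonneg_left hT0 hd0 hle
      refine h2.trans ?_
      rw [harmonic', Finset.sum_mul]
      refine Finset.sum_le_sum_of_subset_of_nonneg (Finset.range_subset_range.2 (by omega)) ?_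
      intro i _ _
      positivity
    have hfirst : a.trace.re = (2:ℝ) ^ m * (1 / (2:ℝ) ^ m * a.trace.re) := by
      field_simp
    rw [add_mul]
    linarith
end
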